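/- Define F : ℂ × ℂ × ℂˣ → Matrix (Fin 3) (Fin 3) ℂ by F(x,y,z) := U(x, y, π*Complex.I*Complex.log z + x*y/2). Then for all (x,y,z), (x',y',z') ∈ ℂ × ℂ × ℂˣ the following are equivalent: (i) there exist integers l, m with x' = x + 2*π*Complex.I*l, y' = y + 2*π*Complex.I*m, and (z' : ℂ) = z * Complex.exp (l*y − m*x); (ii) there exist integers l, m, k with F(x',y',z') = U(2*π*Complex.I*l, 2*π*Complex.I*m, (2*π*Complex.I)^2 * k / 2) * F(x,y,z). (This identifies the quotient of ℂ²×ℂˣ by the Heisenberg-type ⟨ν,μ⟩-action with the quotient H̃_ℤ∖H_ℂ.) -/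

import Mathlib

/-!
Multiplying `F(x,y,z)` on the left by `U(2πi·l, 2πi·m, (2πi)²k/2)` shifts `x` and `y` by `2πi·l`
and `2πi·m`, and, after the correction `x y / 2` is accounted for, shifts `log z` by
`l y - m x + 2πi (k - l m)`. Exponentiating, the ambiguity `2πi ℤ` of the logarithm is exactly
absorbed by the free central parameter `k`, which leaves the condition `z' = z · exp (l y - m x)`.
-/

/-- The 3×3 upper unipotent complex matrix `U(a,b,c) = !![1,a,c; 0,1,b; 0,0,1]`. -/
def U (a b c : ℂ) : Matrix (Fin 3) (Fin 3) ℂ := !![1, a, c; 0, 1, b; 0, 0, 1]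

/-- The map `F : ℂ × ℂ × ℂˣ → H_ℂ`, `F(x,y,z) = U(x, y, πi·log z + xy/2)`. -/
noncomputable def Fmap (x y : ℂ) (z : ℂˣ) : Matrix (Fin 3) (Fin 3) ℂ :=
  U x y ((Real.pi : ℂ) * Complex.I * Complex.log (z : ℂ) + x * y / 2)

open Complex
open scoped Real

lemma U_mul (a b c a' b' c' : ℂ) :
    U a b c * U a' b' c' = U (a + a') (b + b') (c + c' + a * b') := by
  ext i j
  fin_cases i <;> fin_cases j <;> simp [U, Matrix.mul_apply, Fin.sum_univ_three] <;> ring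

lemma U_eq_U_iff {a b c a' b' c' : ℂ} :
    U a b c = U a' b' c' ↔ a = a' ∧ b = b' ∧ c = c' := by
  refine ⟨fun h => ⟨?_, ?_, ?_⟩, fun ⟨ha, hb, hc⟩ => ha ▸ hb ▸ hc ▸ rfl⟩
  · simpa [U] using congrFun (congrFun h 0) 1
  · simpa [U] using congrFun (congrFun h 1) 2
  · simpa [U] using congrFun (congrFun h 0) 2

lemma eq_mul_exp_iff_exists_log_eq {a b : ℂ} (ha : a ≠ 0) (hb : b ≠ 0) (w : ℂ) :
    b = a * exp w ↔ ∃ n : ℤ, log b = log a + w + n * (2 * π * I) := by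
  rw [← exp_eq_exp_iff_exists_int, exp_add, exp_log ha, exp_log hb]

lemma Fmap_eq_U_mul_Fmap_iff (x y x' y' : ℂ) (z z' : ℂˣ) (l m k : ℤ) :
    Fmap x' y' z' = U (2 * π * I * l) (2 * π * I * m) ((2 * π * I) ^ 2 * k / 2) * Fmap x y z ↔
      x' = x + 2 * π * I * l ∧ y' = y + 2 * π * I * m ∧
        log z' = log z + (l * y - m * x) + (k - l * m : ℤ) * (2 * π * I) := by
  rw [Fmap, Fmap, U_mul, U_eq_U_iff, add_comm _ x, add_comm _ y]
  refine and_congr_right fun hx => and_congr_right fun hy => ?_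
  subst hx hy
  push_cast
  -- the third entries differ by `πi` times the logarithm condition
  constructor
  · intro h
    apply mul_left_cancel₀ two_pi_I_ne_zero
    linear_combination 2 * h
  · intro h
    linear_combination (π * I) * h

/-- The identification of the quotient of `ℂ² × ℂˣ` by the Heisenberg-type
`⟨ν,μ⟩`-action with the quotient `H̃_ℤ∖H_ℂ`. -/
theorem heisenberg_quotient_identification (x y : ℂ) (z : ℂˣ) (x' y' : ℂ) (z' : ℂˣ) :
    (∃ l m : ℤ,
        x' = x + 2 * (Real.pi : ℂ) * Complex.I * l ∧
        y' = y + 2 * (Real.pi : ℂ) * Complex.I * m ∧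
        (z' : ℂ) = (z : ℂ) * Complex.exp ((l : ℂ) * y - (m : ℂ) * x)) ↔
    (∃ l m k : ℤ,
        Fmap x' y' z' =
          U (2 * (Real.pi : ℂ) * Complex.I * l) (2 * (Real.pi : ℂ) * Complex.I * m)
            ((2 * (Real.pi : ℂ) * Complex.I) ^ 2 * k / 2) * Fmap x y z) := by
  simp only [Fmap_eq_U_mul_Fmap_iff, eq_mul_exp_iff_exists_log_eq z.ne_zero z'.ne_zero]
  constructor
  · rintro ⟨l, m, hx, hy, n, hlog⟩
    exact ⟨l, m, n + l * m, hx, hy, by rwa [add_sub_cancel_right]⟩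
  · rintro ⟨l, m, k, hx, hy, hlog⟩
    exact ⟨l, m, hx, hy, k - l * m, hlog⟩
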